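/- For any solution (a,b) of the invariant Spin(7) instanton system with a(0) = 0, b(0) = 1 and a ≥ 0, the inequality b(t) > t·a(t)/(2√(t²+1)) persists: if b(t*) = t*·a(t*)/(2√(t*²+1)) at some t* > 0, then d/dt[b(t) - t·a(t)/(2√(t²+1))] at t = t* equals √6·(b(t*)²t*² + b(t*)² + 1)/(t*√(2t*²+2)√(2t*²+3)) > 0. -/

import Mathlib

/-- Metric coefficient `P(t) = √6·√(2t²+2)/√(2t²+3)`. -/
noncomputable def Pfun (t : ℝ) : ℝ := Real.sqrt 6 * Real.sqrt (2 * t ^ 2 + 2) / Real.sqrt (2 * t ^ 2 + 3)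

/-- Metric coefficient `Q(t) = t/(t²+1)`. -/
noncomputable def Qfun (t : ℝ) : ℝ := t / (t ^ 2 + 1)

/-- `(a,b)` solves the invariant Spin(7) instanton system on the set `s`. -/
def SolvesSpin7 (a b : ℝ → ℝ) (s : Set ℝ) : Prop :=
  ∀ t ∈ s,
    HasDerivAt a (Pfun t * a t / t * (b t - 1 / Pfun t)) t ∧
    HasDerivAt b
      (Pfun t / (2 * t) * (1 - (b t) ^ 2) - Pfun t * Qfun t / 2 * (1 - (a t) ^ 2) - Qfun t * b t) t

/-! At a contact point `b = t a / (2√(t²+1))` one may substitute `a = 2√(t²+1) b / t` into the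
system; the derivative of the gap then collapses to `P(t)·(b²(t²+1) + 1) / (2t(t²+1))`, and
`√(2t²+2)² = 2(t²+1)` turns `P(t) / (2(t²+1))` into `√6 / (√(2t²+2)·√(2t²+3))`. -/

open Real

theorem HasDerivAt.mul_div_two_sqrt_sq_add_one {f : ℝ → ℝ} {f' t : ℝ} (hf : HasDerivAt f f' t) :
    HasDerivAt (fun x => x * f x / (2 * √(x ^ 2 + 1)))
      ((f t / (t ^ 2 + 1) + t * f') / (2 * √(t ^ 2 + 1))) t := by
  have hs2 : √(t ^ 2 + 1) ^ 2 = t ^ 2 + 1 := sq_sqrt (by positivity)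
  have hsqrt : HasDerivAt (fun x => 2 * √(x ^ 2 + 1)) (2 * (2 * t / (2 * √(t ^ 2 + 1)))) t :=
    (((hasDerivAt_pow 2 t).add_const 1).sqrt (by positivity)).const_mul 2
      |>.congr_deriv (by norm_num)
  have hnum : HasDerivAt (fun x => x * f x) (1 * f t + t * f') t := (hasDerivAt_id' t).mul hf
  refine (hnum.div hsqrt (by positivity)).congr_deriv ?_
  field_simp
  rw [hs2]
  ring

theorem Pfun_div_two_mul_sq_add_one (t : ℝ) :
    Pfun t / (2 * (t ^ 2 + 1)) = √6 / (√(2 * t ^ 2 + 2) * √(2 * t ^ 2 + 3)) := by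
  have hq2 : √(2 * t ^ 2 + 2) ^ 2 = 2 * (t ^ 2 + 1) := by rw [sq_sqrt (by positivity)]; ring
  rw [Pfun, ← hq2]
  field_simp

theorem spin7_gap_deriv_at_contact {t A B P : ℝ} (ht : 0 < t) (hP : P ≠ 0)
    (hB : B = t * A / (2 * √(t ^ 2 + 1))) :
    P / (2 * t) * (1 - B ^ 2) - P * (t / (t ^ 2 + 1)) / 2 * (1 - A ^ 2) - t / (t ^ 2 + 1) * B
      - (A / (t ^ 2 + 1) + t * (P * A / t * (B - 1 / P))) / (2 * √(t ^ 2 + 1))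
      = P / (2 * (t ^ 2 + 1)) * (B ^ 2 * t ^ 2 + B ^ 2 + 1) / t := by
  have hs2 : √(t ^ 2 + 1) ^ 2 = t ^ 2 + 1 := sq_sqrt (by positivity)
  have hA : A = 2 * √(t ^ 2 + 1) * B / t := by rw [hB]; field_simp
  subst hA
  field_simp
  rw [hs2]
  ring

theorem spin7_apriori_bound_persists_general (a b : ℝ → ℝ) (l u tstar D : ℝ)
    (hl : 0 ≤ l) (hsol : SolvesSpin7 a b (Set.Ioo l u))
    (htstar : tstar ∈ Set.Ioo l u)
    (heq : b tstar = tstar * a tstar / (2 * Real.sqrt (tstar ^ 2 + 1)))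
    (hD : HasDerivAt (fun t => b t - t * a t / (2 * Real.sqrt (t ^ 2 + 1))) D tstar) :
    D = Real.sqrt 6 * ((b tstar) ^ 2 * tstar ^ 2 + (b tstar) ^ 2 + 1) /
        (tstar * Real.sqrt (2 * tstar ^ 2 + 2) * Real.sqrt (2 * tstar ^ 2 + 3)) ∧
    0 < D := by
  have ht : 0 < tstar := hl.trans_lt htstar.1
  obtain ⟨ha, hb⟩ := hsol tstar htstar
  have hP : Pfun tstar ≠ 0 := by unfold Pfun; positivity
  have hD_Pfun : D = Pfun tstar / (2 * (tstar ^ 2 + 1)) *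
      (b tstar ^ 2 * tstar ^ 2 + b tstar ^ 2 + 1) / tstar := by
    rw [hD.unique (hb.sub ha.mul_div_two_sqrt_sq_add_one), Qfun]
    exact spin7_gap_deriv_at_contact ht hP heq
  have hD_eq : D = √6 * (b tstar ^ 2 * tstar ^ 2 + b tstar ^ 2 + 1) /
      (tstar * √(2 * tstar ^ 2 + 2) * √(2 * tstar ^ 2 + 3)) := by
    rw [hD_Pfun, Pfun_div_two_mul_sq_add_one]
    field_simp
  exact ⟨hD_eq, by rw [hD_eq]; positivity⟩

/-- Persistence of the a priori bound `b > t·a/(2√(t²+1))`: at any time `t* > 0` where equality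
`b(t*) = t*·a(t*)/(2√(t*²+1))` holds, the derivative of the difference equals the explicitly
positive quantity `√6·(b²t² + b² + 1)/(t√(2t²+2)√(2t²+3))`. -/
theorem spin7_apriori_bound_persists (a b : ℝ → ℝ) (l u tstar D : ℝ)
    (hl : 0 ≤ l) (hsol : SolvesSpin7 a b (Set.Ioo l u))
    (htstar : tstar ∈ Set.Ioo l u)
    (ha0 : a 0 = 0) (hb0 : b 0 = 1) (hapos : ∀ t, 0 ≤ a t)
    (heq : b tstar = tstar * a tstar / (2 * Real.sqrt (tstar ^ 2 + 1)))
    (hD : HasDerivAt (fun t => b t - t * a t / (2 * Real.sqrt (t ^ 2 + 1))) D tstar) :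
    D = Real.sqrt 6 * ((b tstar) ^ 2 * tstar ^ 2 + (b tstar) ^ 2 + 1) /
        (tstar * Real.sqrt (2 * tstar ^ 2 + 2) * Real.sqrt (2 * tstar ^ 2 + 3)) ∧
    0 < D :=
  spin7_apriori_bound_persists_general a b l u tstar D hl hsol htstar heq hD
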